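/- arXiv:1103.1795 — 2 statements merged into one kernel-verified Lean document; each statement's English description precedes it below -/
import Mathlib

section
/- Under conditions (A1)–(A4), for any sequence of unit vectors α_n ∈ R^{p_n}, the quantities γ_{ni} = α_n^T M̄_n^{-1/2}(β_{n0}) X_i^T X_i M̄_n^{-1/2}(β_{n0}) α_n satisfy max_{1≤i≤n} γ_{ni} = O(p_n/n); in particular, if p_n/n → 0 then max_{1≤i≤n} γ_{ni} → 0 as n → ∞. -/
open MeasureTheory ProbabilityTheory Filter Matrix
open scoped BigOperators ENNReal NNReal Topology

noncomputable section

namespace GEE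

/-- Euclidean norm of a vector in `Fin k → ℝ`. -/
def vnorm {k : ℕ} (v : Fin k → ℝ) : ℝ := Real.sqrt (∑ i, v i ^ 2)

/-- Frobenius norm of a real matrix. -/
def fnorm {a b : ℕ} (M : Matrix (Fin a) (Fin b) ℝ) : ℝ :=
  Real.sqrt (∑ i, ∑ j, M i j ^ 2)

/-- The logistic (inverse logit) function. -/
def logistic (t : ℝ) : ℝ := Real.exp t / (1 + Real.exp t)

/-- `Z_n = O_p(a_n)` : boundedness in probability of `Z_n / a_n`. -/
def IsBigOP {Ω : ℕ → Type} [∀ n, MeasurableSpace (Ω n)]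
    (P : ∀ n, Measure (Ω n)) (Z : ∀ n, Ω n → ℝ) (a : ℕ → ℝ) : Prop :=
  ∀ ε : ℝ, 0 < ε → ∃ C : ℝ, 0 < C ∧
    ∀ᶠ n in atTop, P n {ω | C * a n < |Z n ω|} ≤ ENNReal.ofReal ε

/-- `Z_n = o_p(a_n)` : `Z_n / a_n` converges to `0` in probability. -/
def IsLittleOP {Ω : ℕ → Type} [∀ n, MeasurableSpace (Ω n)]
    (P : ∀ n, Measure (Ω n)) (Z : ∀ n, Ω n → ℝ) (a : ℕ → ℝ) : Prop :=
  ∀ ε : ℝ, 0 < ε →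
    Tendsto (fun n => P n {ω | ε * a n < |Z n ω|}) atTop (𝓝 0)

/-- Convergence in distribution to the standard normal law, stated via CDFs. -/
def TendstoStdNormal {Ω : ℕ → Type} [∀ n, MeasurableSpace (Ω n)]
    (P : ∀ n, Measure (Ω n)) (Z : ∀ n, Ω n → ℝ) : Prop :=
  ∀ t : ℝ, Tendsto (fun n => (P n {ω | Z n ω ≤ t}).toReal) atTop
    (𝓝 ((gaussianReal 0 1 (Set.Iic t)).toReal))

/-- Convergence in distribution to the `l`-dimensional standard normal law `N_l(0, I_l)`. -/
def TendstoStdNormalVec {Ω : ℕ → Type} [∀ n, MeasurableSpace (Ω n)] (l : ℕ)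
    (P : ∀ n, Measure (Ω n)) (Z : ∀ n, Ω n → Fin l → ℝ) : Prop :=
  ∀ t : Fin l → ℝ, Tendsto
    (fun n => (P n {ω | ∀ j, Z n ω j ≤ t j}).toReal) atTop
    (𝓝 (((Measure.pi fun _ : Fin l => gaussianReal 0 1) {x | ∀ j, x j ≤ t j}).toReal))

/-- The chi-squared distribution with `l` degrees of freedom, realized as the law of the
sum of squares of `l` i.i.d. standard normals. -/
def chiSq (l : ℕ) : Measure ℝ :=
  Measure.map (fun x : Fin l → ℝ => ∑ j, x j ^ 2)
    (Measure.pi fun _ : Fin l => gaussianReal 0 1)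

/-- Convergence in distribution to the chi-squared law with `l` degrees of freedom. -/
def TendstoChiSq {Ω : ℕ → Type} [∀ n, MeasurableSpace (Ω n)] (l : ℕ)
    (P : ∀ n, Measure (Ω n)) (Z : ∀ n, Ω n → ℝ) : Prop :=
  ∀ t : ℝ, Tendsto (fun n => (P n {ω | Z n ω ≤ t}).toReal) atTop
    (𝓝 ((chiSq l (Set.Iic t)).toReal))

/-- Marginal mean vector `π_i(β)` of cluster `i` under the marginal logistic model. -/
def piv {a b : ℕ} (Xi : Matrix (Fin a) (Fin b) ℝ) (β : Fin b → ℝ) : Fin a → ℝ :=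
  fun j => logistic (Xi.mulVec β j)

/-- The diagonal matrix `A_i(β)^{1/2}`. -/
def Ahalf {a b : ℕ} (Xi : Matrix (Fin a) (Fin b) ℝ) (β : Fin b → ℝ) :
    Matrix (Fin a) (Fin a) ℝ :=
  Matrix.diagonal fun j => Real.sqrt (piv Xi β j * (1 - piv Xi β j))

/-- The diagonal matrix `A_i(β)^{-1/2}`. -/
def Ainvhalf {a b : ℕ} (Xi : Matrix (Fin a) (Fin b) ℝ) (β : Fin b → ℝ) :
    Matrix (Fin a) (Fin a) ℝ :=
  Matrix.diagonal fun j => (Real.sqrt (piv Xi β j * (1 - piv Xi β j)))⁻¹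

/-- Standardized residual `ε_i(β) = A_i(β)^{-1/2} (Y_i - π_i(β))`. -/
def eps {a b : ℕ} (Xi : Matrix (Fin a) (Fin b) ℝ) (β : Fin b → ℝ) (Yi : Fin a → ℝ) :
    Fin a → ℝ :=
  (Ainvhalf Xi β).mulVec (Yi - piv Xi β)

/-- Single-cluster contribution `X_iᵀ A_i^{1/2}(β) W A_i^{-1/2}(β) (Y_i - π_i(β))` to a GEE
estimating function with working inverse-correlation matrix `W`. -/
def Scluster {a b : ℕ} (Xi : Matrix (Fin a) (Fin b) ℝ) (W : Matrix (Fin a) (Fin a) ℝ)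
    (β : Fin b → ℝ) (Yi : Fin a → ℝ) : Fin b → ℝ :=
  (Xiᵀ * Ahalf Xi β * W * Ainvhalf Xi β).mulVec (Yi - piv Xi β)

/-- Single-cluster contribution `X_iᵀ A_i^{1/2}(β) W A_i^{1/2}(β) X_i` to `H̄_n(β)`. -/
def Hcluster {a b : ℕ} (Xi : Matrix (Fin a) (Fin b) ℝ) (W : Matrix (Fin a) (Fin a) ℝ)
    (β : Fin b → ℝ) : Matrix (Fin b) (Fin b) ℝ :=
  Xiᵀ * Ahalf Xi β * W * Ahalf Xi β * Xi

/-- Single-cluster contribution `X_iᵀ A_i^{1/2}(β) W R W A_i^{1/2}(β) X_i` to `M̄_n(β)`. -/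
def Mcluster {a b : ℕ} (Xi : Matrix (Fin a) (Fin b) ℝ) (W R : Matrix (Fin a) (Fin a) ℝ)
    (β : Fin b → ℝ) : Matrix (Fin b) (Fin b) ℝ :=
  Xiᵀ * Ahalf Xi β * W * R * W * Ahalf Xi β * Xi

/-- Single-cluster contribution `X_iᵀ A_i^{1/2}(β) W ε_i(β) ε_i(β)ᵀ W A_i^{1/2}(β) X_i` to the
middle of the sandwich estimator. -/
def Mhatcluster {a b : ℕ} (Xi : Matrix (Fin a) (Fin b) ℝ) (W : Matrix (Fin a) (Fin a) ℝ)
    (β : Fin b → ℝ) (Yi : Fin a → ℝ) : Matrix (Fin b) (Fin b) ℝ :=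
  Xiᵀ * Ahalf Xi β * W * vecMulVec (eps Xi β Yi) (eps Xi β Yi) * W * Ahalf Xi β * Xi

/-- The Jacobian matrix (`∂f/∂βᵀ`) of a map `f : (Fin b → ℝ) → (Fin b → ℝ)` at `β`. -/
def jacobian {b : ℕ} (f : (Fin b → ℝ) → (Fin b → ℝ)) (β : Fin b → ℝ) :
    Matrix (Fin b) (Fin b) ℝ :=
  Matrix.of fun k l => fderiv ℝ (fun x => f x k) β (Pi.single l 1)

/-- Smallest Rayleigh quotient value over unit vectors; equals `λ_min(M)` for symmetric `M`. -/
def lmin {b : ℕ} (M : Matrix (Fin b) (Fin b) ℝ) : ℝ :=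
  sInf {r | ∃ v : Fin b → ℝ, vnorm v = 1 ∧ r = v ⬝ᵥ M.mulVec v}

/-- Largest Rayleigh quotient value over unit vectors; equals `λ_max(M)` for symmetric `M`. -/
def lmax {b : ℕ} (M : Matrix (Fin b) (Fin b) ℝ) : ℝ :=
  sSup {r | ∃ v : Fin b → ℝ, vnorm v = 1 ∧ r = v ⬝ᵥ M.mulVec v}

/-! General GEE versions (arbitrary smooth marginal mean function `μ`). -/

/-- Marginal mean vector `μ_i(β)` in the general GEE model with mean function `mu`. -/
def gpiv {a b : ℕ} (mu : ℝ → ℝ) (Xi : Matrix (Fin a) (Fin b) ℝ) (β : Fin b → ℝ) :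
    Fin a → ℝ :=
  fun j => mu (Xi.mulVec β j)

/-- `A_i(β)^{1/2}` in the general GEE model: diagonal with entries `√(μ̇(X_ijᵀ β))`. -/
def gAhalf {a b : ℕ} (mu : ℝ → ℝ) (Xi : Matrix (Fin a) (Fin b) ℝ) (β : Fin b → ℝ) :
    Matrix (Fin a) (Fin a) ℝ :=
  Matrix.diagonal fun j => Real.sqrt (deriv mu (Xi.mulVec β j))

/-- `A_i(β)^{-1/2}` in the general GEE model. -/
def gAinvhalf {a b : ℕ} (mu : ℝ → ℝ) (Xi : Matrix (Fin a) (Fin b) ℝ) (β : Fin b → ℝ) :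
    Matrix (Fin a) (Fin a) ℝ :=
  Matrix.diagonal fun j => (Real.sqrt (deriv mu (Xi.mulVec β j)))⁻¹

/-- Standardized residual in the general GEE model. -/
def geps {a b : ℕ} (mu : ℝ → ℝ) (Xi : Matrix (Fin a) (Fin b) ℝ) (β : Fin b → ℝ)
    (Yi : Fin a → ℝ) : Fin a → ℝ :=
  (gAinvhalf mu Xi β).mulVec (Yi - gpiv mu Xi β)

/-- Single-cluster contribution to the general GEE estimating function. -/
def gScluster {a b : ℕ} (mu : ℝ → ℝ) (Xi : Matrix (Fin a) (Fin b) ℝ)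
    (W : Matrix (Fin a) (Fin a) ℝ) (β : Fin b → ℝ) (Yi : Fin a → ℝ) : Fin b → ℝ :=
  (Xiᵀ * gAhalf mu Xi β * W * gAinvhalf mu Xi β).mulVec (Yi - gpiv mu Xi β)

/-- Single-cluster contribution to `H̄_n(β)` in the general GEE model. -/
def gHcluster {a b : ℕ} (mu : ℝ → ℝ) (Xi : Matrix (Fin a) (Fin b) ℝ)
    (W : Matrix (Fin a) (Fin a) ℝ) (β : Fin b → ℝ) : Matrix (Fin b) (Fin b) ℝ :=
  Xiᵀ * gAhalf mu Xi β * W * gAhalf mu Xi β * Xi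

/-- Single-cluster contribution to `M̄_n(β)` in the general GEE model. -/
def gMcluster {a b : ℕ} (mu : ℝ → ℝ) (Xi : Matrix (Fin a) (Fin b) ℝ)
    (W R : Matrix (Fin a) (Fin a) ℝ) (β : Fin b → ℝ) : Matrix (Fin b) (Fin b) ℝ :=
  Xiᵀ * gAhalf mu Xi β * W * R * W * gAhalf mu Xi β * Xi

end GEE

open GEE

/-! Write `w = M̄ₙ^{-1/2} αₙ`, so that `γₙᵢ = |Xᵢ w|²` and `wᵀ M̄ₙ w = |αₙ|² = 1`.
By (A2) each cluster term of `M̄ₙ` dominates `c Xᵢᵀ Xᵢ`, where `c > 0` combines `b₁(1 - b₂)`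
with the smallest eigenvalue of `R̄⁻¹ R₀ R̄⁻¹`; by (A3) this gives `M̄ₙ ≥ c b₃ n I`, hence
`|w|² ≤ 1 / (c b₃ n)`. Finally `|Xᵢ w|² ≤ ‖Xᵢ‖_F² |w|² ≤ m C² pₙ |w|²` by (A1). -/

namespace Matrix

variable {ι κ : Type*} [Fintype ι] [Fintype κ]

lemma dotProduct_transpose_mul_mul_mulVec (D : Matrix κ ι ℝ) (B : Matrix κ κ ℝ) (w : ι → ℝ) :
    w ⬝ᵥ (Dᵀ * B * D) *ᵥ w = D *ᵥ w ⬝ᵥ B *ᵥ (D *ᵥ w) := by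
  rw [← mulVec_mulVec, ← mulVec_mulVec, dotProduct_mulVec, vecMul_transpose]

lemma dotProduct_transpose_mul_self_mulVec (D : Matrix κ ι ℝ) (w : ι → ℝ) :
    w ⬝ᵥ (Dᵀ * D) *ᵥ w = ∑ j, (D *ᵥ w) j ^ 2 := by
  rw [← mulVec_mulVec, dotProduct_mulVec, vecMul_transpose]
  simp only [dotProduct, sq]

lemma sum_sq_mulVec_le (D : Matrix κ ι ℝ) (w : ι → ℝ) :
    ∑ j, (D *ᵥ w) j ^ 2 ≤ (∑ j, ∑ k, D j k ^ 2) * ∑ k, w k ^ 2 := by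
  rw [Finset.sum_mul]
  exact Finset.sum_le_sum fun j _ => Finset.sum_mul_sq_le_sq_mul_sq _ _ _

lemma PosDef.exists_pos_mul_sum_sq_le {M : Matrix ι ι ℝ} (hM : M.PosDef) :
    ∃ c > 0, ∀ x : ι → ℝ, c * ∑ i, x i ^ 2 ≤ x ⬝ᵥ M *ᵥ x := by
  rcases isEmpty_or_nonempty ι with hι | hι
  · exact ⟨1, one_pos, fun x => by simp⟩
  set q : EuclideanSpace ℝ ι → ℝ := fun u => u.ofLp ⬝ᵥ M *ᵥ u.ofLp
  have hq : Continuous q := by fun_prop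
  obtain ⟨v, hv, hmin⟩ := (isCompact_sphere (0 : EuclideanSpace ℝ ι) 1).exists_isMinOn
    (NormedSpace.sphere_nonempty.2 zero_le_one) hq.continuousOn
  have hv0 : v.ofLp ≠ 0 := fun h => by
    simp [show v = 0 from (WithLp.ofLp_injective 2).eq_iff.1 h] at hv
  refine ⟨q v, by simpa using hM.dotProduct_mulVec_pos hv0, fun x => ?_⟩
  rcases eq_or_ne x 0 with rfl | hx
  · simp
  set u : EuclideanSpace ℝ ι := WithLp.toLp 2 x
  have hu : 0 < ‖u‖ := norm_pos_iff.2 (by simpa [u] using hx)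
  have hsq : ∑ i, x i ^ 2 = ‖u‖ ^ 2 := (EuclideanSpace.real_norm_sq_eq u).symm
  -- `q` is homogeneous of degree two, so its minimum on the sphere bounds it everywhere
  have hscale : q (‖u‖⁻¹ • u) = (‖u‖⁻¹) ^ 2 * (x ⬝ᵥ M *ᵥ x) := by
    simp only [q, WithLp.ofLp_smul, mulVec_smul, smul_dotProduct, dotProduct_smul, smul_eq_mul]
    ring
  have hle : q v ≤ q (‖u‖⁻¹ • u) := hmin (by simp [norm_smul, hu.ne'])
  rw [hscale] at hle
  rw [hsq]
  calc q v * ‖u‖ ^ 2 ≤ (‖u‖⁻¹) ^ 2 * (x ⬝ᵥ M *ᵥ x) * ‖u‖ ^ 2 := by gcongr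
    _ = x ⬝ᵥ M *ᵥ x := by field_simp

lemma IsSymm.dotProduct_mul_mul_mulVec {S : Matrix ι ι ℝ} (hS : S.IsSymm) (A : Matrix ι ι ℝ)
    (x : ι → ℝ) : x ⬝ᵥ (S * A * S) *ᵥ x = S *ᵥ x ⬝ᵥ A *ᵥ (S *ᵥ x) := by
  simpa only [hS.eq] using dotProduct_transpose_mul_mul_mulVec S A x

lemma mul_sum_sq_mulVec_le_of_mul_mul_eq_one [DecidableEq ι] {S M : Matrix ι ι ℝ}
    (hS : S.IsSymm) (hSMS : S * M * S = 1) {c : ℝ}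
    (hM : ∀ v : ι → ℝ, c * ∑ k, v k ^ 2 ≤ v ⬝ᵥ M *ᵥ v) (x : ι → ℝ) :
    c * ∑ k, (S *ᵥ x) k ^ 2 ≤ ∑ k, x k ^ 2 := by
  have h := hS.dotProduct_mul_mul_mulVec M x
  rw [hSMS, one_mulVec] at h
  have hSx := hM (S *ᵥ x)
  rw [← h] at hSx
  simpa only [dotProduct, sq] using hSx

lemma dotProduct_conj_transpose_mul_self_mulVec_le [DecidableEq ι] {S M : Matrix ι ι ℝ}
    (hS : S.IsSymm) (hSMS : S * M * S = 1) {c : ℝ} (hc : 0 < c)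
    (hM : ∀ v : ι → ℝ, c * ∑ k, v k ^ 2 ≤ v ⬝ᵥ M *ᵥ v) (D : Matrix κ ι ℝ) (x : ι → ℝ) :
    x ⬝ᵥ (S * (Dᵀ * D) * S) *ᵥ x ≤ (∑ j, ∑ k, D j k ^ 2) * (∑ k, x k ^ 2) / c := by
  have hSx : ∑ k, (S *ᵥ x) k ^ 2 ≤ (∑ k, x k ^ 2) / c := by
    rw [le_div_iff₀ hc, mul_comm]
    exact mul_sum_sq_mulVec_le_of_mul_mul_eq_one hS hSMS hM x
  rw [hS.dotProduct_mul_mul_mulVec, dotProduct_transpose_mul_self_mulVec, mul_div_assoc]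
  exact (sum_sq_mulVec_le D _).trans (by gcongr)

lemma mul_mul_sum_sq_le_dotProduct_sum_mulVec {n : ℕ} {A B : Fin n → Matrix ι ι ℝ} {c κ : ℝ}
    (hc : 0 ≤ c) (hAB : ∀ i v, c * (v ⬝ᵥ A i *ᵥ v) ≤ v ⬝ᵥ B i *ᵥ v)
    (hA : ∀ v : ι → ℝ, κ * ∑ k, v k ^ 2 ≤ v ⬝ᵥ (∑ i, A i) *ᵥ v) (v : ι → ℝ) :
    c * κ * ∑ k, v k ^ 2 ≤ v ⬝ᵥ (∑ i, B i) *ᵥ v := by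
  simp only [sum_mulVec, dotProduct_sum] at hA ⊢
  calc c * κ * ∑ k, v k ^ 2 ≤ c * ∑ i, v ⬝ᵥ A i *ᵥ v := by
        rw [mul_assoc]; exact mul_le_mul_of_nonneg_left (hA v) hc
    _ ≤ ∑ i, v ⬝ᵥ B i *ᵥ v := by
        rw [Finset.mul_sum]; exact Finset.sum_le_sum fun i _ => hAB i v

lemma dotProduct_conj_gram_mulVec_le_div [DecidableEq ι] {n : ℕ} (X : Fin n → Matrix κ ι ℝ)
    (B : Fin n → Matrix ι ι ℝ) {S : Matrix ι ι ℝ} (hS : S.IsSymm)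
    (hSMS : S * (∑ i, B i) * S = 1) {c d : ℝ} (hc : 0 < c) (hd : 0 < d)
    (hXB : ∀ i v, c * (v ⬝ᵥ ((X i)ᵀ * X i) *ᵥ v) ≤ v ⬝ᵥ B i *ᵥ v)
    (hX : ∀ v : ι → ℝ, d * ∑ k, v k ^ 2 ≤ (n : ℝ)⁻¹ * (v ⬝ᵥ (∑ i, (X i)ᵀ * X i) *ᵥ v))
    {x : ι → ℝ} (hx : ∑ k, x k ^ 2 = 1) (i : Fin n) :
    x ⬝ᵥ (S * ((X i)ᵀ * X i) * S) *ᵥ x ≤ (∑ j, ∑ k, X i j k ^ 2) / (c * (d * n)) := by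
  have hn' : (0 : ℝ) < n := by exact_mod_cast i.pos
  have hB : ∀ v : ι → ℝ, c * (d * n) * ∑ k, v k ^ 2 ≤ v ⬝ᵥ (∑ i, B i) *ᵥ v :=
    mul_mul_sum_sq_le_dotProduct_sum_mulVec hc.le hXB fun v => by
      have h := hX v
      rw [le_inv_mul_iff₀ hn'] at h
      linarith
  simpa [hx] using
    dotProduct_conj_transpose_mul_self_mulVec_le hS hSMS (by positivity) hB (X i) x

end Matrix

lemma tendsto_sSup_of_nonneg_of_le {f : ∀ n, Fin n → ℝ} {g : ℕ → ℝ} (hf : ∀ n i, 0 ≤ f n i)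
    (hfg : ∀ n i, f n i ≤ g n) (hg0 : ∀ n, 0 ≤ g n) (hg : Tendsto g atTop (𝓝 0)) :
    Tendsto (fun n => sSup {r : ℝ | ∃ i : Fin n, r = f n i}) atTop (𝓝 0) :=
  squeeze_zero (fun n => Real.sSup_nonneg fun _ ⟨i, hr⟩ => hr ▸ hf n i)
    (fun n => Real.sSup_le (fun _ ⟨i, hr⟩ => hr ▸ hfg n i) (hg0 n)) hg

namespace GEE

lemma sq_vnorm {k : ℕ} (v : Fin k → ℝ) : vnorm v ^ 2 = ∑ i, v i ^ 2 :=
  Real.sq_sqrt (by positivity)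

lemma sum_sq_entries_le_of_vnorm_le {a b : ℕ} {D : Matrix (Fin a) (Fin b) ℝ} {r : ℝ}
    (hD : ∀ j, vnorm (D j) ≤ r) : ∑ j, ∑ k, D j k ^ 2 ≤ a * r ^ 2 :=
  calc ∑ j, ∑ k, D j k ^ 2 ≤ ∑ _j : Fin a, r ^ 2 := Finset.sum_le_sum fun j _ => by
        rw [← sq_vnorm]; exact pow_le_pow_left₀ (Real.sqrt_nonneg _) (hD j) 2
    _ = a * r ^ 2 := by simp

lemma Mcluster_eq {a b : ℕ} (Xi : Matrix (Fin a) (Fin b) ℝ) (W R : Matrix (Fin a) (Fin a) ℝ)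
    (β : Fin b → ℝ) :
    Mcluster Xi W R β = (Ahalf Xi β * Xi)ᵀ * (W * R * W) * (Ahalf Xi β * Xi) := by
  simp [Mcluster, transpose_mul, Ahalf, Matrix.mul_assoc]

lemma mul_sum_sq_le_sum_sq_Ahalf_mul_mulVec {a b : ℕ} {Xi : Matrix (Fin a) (Fin b) ℝ}
    {β : Fin b → ℝ} {b1 b2 : ℝ} (hb1 : 0 ≤ b1) (hb2 : b2 ≤ 1)
    (hπ : ∀ j, b1 ≤ piv Xi β j ∧ piv Xi β j ≤ b2) (w : Fin b → ℝ) :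
    b1 * (1 - b2) * ∑ j, (Xi *ᵥ w) j ^ 2 ≤ ∑ j, ((Ahalf Xi β * Xi) *ᵥ w) j ^ 2 := by
  rw [Finset.mul_sum]
  refine Finset.sum_le_sum fun j _ => ?_
  obtain ⟨hlo, hhi⟩ := hπ j
  rw [← mulVec_mulVec, Ahalf, mulVec_diagonal, mul_pow, Real.sq_sqrt (by nlinarith)]
  gcongr
  nlinarith

lemma exists_pos_mul_gram_le_Mcluster {m : ℕ} {W R : Matrix (Fin m) (Fin m) ℝ} (hW : W.PosDef)
    (hR : R.PosDef) {b1 b2 : ℝ} (hb1 : 0 < b1) (hb2 : b2 < 1) :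
    ∃ c > 0, ∀ {b : ℕ} (Xi : Matrix (Fin m) (Fin b) ℝ) (β : Fin b → ℝ),
      (∀ j, b1 ≤ piv Xi β j ∧ piv Xi β j ≤ b2) →
      ∀ w, c * (w ⬝ᵥ (Xiᵀ * Xi) *ᵥ w) ≤ w ⬝ᵥ Mcluster Xi W R β *ᵥ w := by
  have hWRW : (W * R * W).PosDef := by
    have h := hR.conjTranspose_mul_mul_same (mulVec_injective_of_isUnit hW.isUnit)
    rwa [hW.1.eq] at h
  obtain ⟨c, hc, hcWRW⟩ := hWRW.exists_pos_mul_sum_sq_le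
  refine ⟨c * (b1 * (1 - b2)), by have := sub_pos.2 hb2; positivity, fun Xi β hπ w => ?_⟩
  rw [Mcluster_eq, dotProduct_transpose_mul_mul_mulVec, dotProduct_transpose_mul_self_mulVec,
    mul_assoc]
  exact (mul_le_mul_of_nonneg_left (mul_sum_sq_le_sum_sq_Ahalf_mul_mulVec hb1.le hb2.le hπ w)
    hc.le).trans (hcWRW _)

end GEE

theorem gee_gamma_max_bound_general
    (m : ℕ) (p : ℕ → ℕ)
    (X : ∀ n, Fin n → Matrix (Fin m) (Fin (p n)) ℝ)
    (β0 : ∀ n, Fin (p n) → ℝ)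
    (hA1 : ∃ C : ℝ, ∀ n (i : Fin n) j, vnorm (X n i j) ≤ C * Real.sqrt (p n))
    (b1 b2 : ℝ) (hb1 : 0 < b1) (hb2 : b2 < 1)
    (hA2 : ∀ n (i : Fin n) j, b1 ≤ piv (X n i) (β0 n) j ∧ piv (X n i) (β0 n) j ≤ b2)
    (b3 b4 : ℝ) (hb3 : 0 < b3)
    (hA3 : ∀ n, 0 < n → ∀ v : Fin (p n) → ℝ,
      b3 * (∑ k, v k ^ 2) ≤ (n : ℝ)⁻¹ * (v ⬝ᵥ (∑ i, (X n i)ᵀ * X n i).mulVec v) ∧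
      (n : ℝ)⁻¹ * (v ⬝ᵥ (∑ i, (X n i)ᵀ * X n i).mulVec v) ≤ b4 * (∑ k, v k ^ 2))
    (R0 : Matrix (Fin m) (Fin m) ℝ) (hR0 : R0.PosDef)
    (Rbar : Matrix (Fin m) (Fin m) ℝ) (hRbar : Rbar.PosDef)
    (Minvhalf : ∀ n, Matrix (Fin (p n)) (Fin (p n)) ℝ)
    (hM : ∀ n, 0 < n → (Minvhalf n).IsSymm ∧
      Minvhalf n * (∑ i, Mcluster (X n i) Rbar⁻¹ R0 (β0 n)) * Minvhalf n = 1)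
    (α : ∀ n, Fin (p n) → ℝ) (hα : ∀ n, vnorm (α n) = 1) :
    (∃ C : ℝ, 0 < C ∧ ∀ n, 0 < n → ∀ i : Fin n,
        α n ⬝ᵥ (Minvhalf n * ((X n i)ᵀ * X n i) * Minvhalf n).mulVec (α n) ≤
          C * ((p n : ℝ) / n)) ∧
    (Tendsto (fun n => (p n : ℝ) / n) atTop (𝓝 0) →
      Tendsto (fun n => sSup {r : ℝ | ∃ i : Fin n,
          r = α n ⬝ᵥ (Minvhalf n * ((X n i)ᵀ * X n i) * Minvhalf n).mulVec (α n)})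
        atTop (𝓝 0)) := by
  obtain ⟨C, hC⟩ := hA1
  obtain ⟨c, hc, hcM⟩ := exists_pos_mul_gram_le_Mcluster hRbar.inv hR0 hb1 hb2
  set K := ((m : ℝ) * C ^ 2 + 1) / (c * b3)
  have key : ∀ n (i : Fin n),
      0 ≤ α n ⬝ᵥ (Minvhalf n * ((X n i)ᵀ * X n i) * Minvhalf n) *ᵥ α n ∧
      α n ⬝ᵥ (Minvhalf n * ((X n i)ᵀ * X n i) * Minvhalf n) *ᵥ α n ≤ K * (p n / n) := by
    intro n i
    obtain ⟨hS, hSMS⟩ := hM n i.pos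
    have hγ := dotProduct_conj_gram_mulVec_le_div (X n) _ hS hSMS hc hb3
      (fun i => hcM _ _ (hA2 n i)) (fun v => (hA3 n i.pos v).1)
      (by rw [← sq_vnorm, hα n, one_pow]) i
    have hXF : ∑ j, ∑ k, X n i j k ^ 2 ≤ m * C ^ 2 * p n := by
      simpa [mul_pow, mul_assoc] using sum_sq_entries_le_of_vnorm_le (hC n i)
    refine ⟨?_, hγ.trans ?_⟩
    · rw [hS.dotProduct_mul_mul_mulVec, dotProduct_transpose_mul_self_mulVec]
      positivity
    · calc (∑ j, ∑ k, X n i j k ^ 2) / (c * (b3 * n))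
          _ ≤ (m * C ^ 2 + 1) * p n / (c * (b3 * n)) := by gcongr; linarith
          _ = K * (p n / n) := by ring
  refine ⟨⟨K, by positivity, fun n _ i => (key n i).2⟩, fun h => ?_⟩
  exact tendsto_sSup_of_nonneg_of_le (fun n i => (key n i).1) (fun n i => (key n i).2)
    (fun n => by positivity) (by simpa using h.const_mul K)

/-- the quantities γ_ni = α_nᵀ M̄_n^{-1/2} XᵢᵀXᵢ M̄_n^{-1/2} α_n satisfy
max_i γ_ni = O(p_n/n), and hence tend to 0 when p_n/n → 0. -/
theorem gee_gamma_max_bound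
    (m : ℕ) (hm : 0 < m) (p : ℕ → ℕ) (hp : ∀ n, 0 < p n)
    (X : ∀ n, Fin n → Matrix (Fin m) (Fin (p n)) ℝ)
    (β0 : ∀ n, Fin (p n) → ℝ)
    (hA1 : ∃ C : ℝ, ∀ n (i : Fin n) j, vnorm (X n i j) ≤ C * Real.sqrt (p n))
    (b1 b2 : ℝ) (hb1 : 0 < b1) (hb2 : b2 < 1)
    (hA2 : ∀ n (i : Fin n) j, b1 ≤ piv (X n i) (β0 n) j ∧ piv (X n i) (β0 n) j ≤ b2)
    (b3 b4 : ℝ) (hb3 : 0 < b3)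
    (hA3 : ∀ n, 0 < n → ∀ v : Fin (p n) → ℝ,
      b3 * (∑ k, v k ^ 2) ≤ (n : ℝ)⁻¹ * (v ⬝ᵥ (∑ i, (X n i)ᵀ * X n i).mulVec v) ∧
      (n : ℝ)⁻¹ * (v ⬝ᵥ (∑ i, (X n i)ᵀ * X n i).mulVec v) ≤ b4 * (∑ k, v k ^ 2))
    (R0 : Matrix (Fin m) (Fin m) ℝ) (hR0 : R0.PosDef)
    (Rbar : Matrix (Fin m) (Fin m) ℝ) (hRbar : Rbar.PosDef)
    (Minvhalf : ∀ n, Matrix (Fin (p n)) (Fin (p n)) ℝ)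
    (hM : ∀ n, 0 < n → (Minvhalf n).IsSymm ∧
      Minvhalf n * (∑ i, Mcluster (X n i) Rbar⁻¹ R0 (β0 n)) * Minvhalf n = 1)
    (α : ∀ n, Fin (p n) → ℝ) (hα : ∀ n, vnorm (α n) = 1) :
    (∃ C : ℝ, 0 < C ∧ ∀ n, 0 < n → ∀ i : Fin n,
        α n ⬝ᵥ (Minvhalf n * ((X n i)ᵀ * X n i) * Minvhalf n).mulVec (α n) ≤
          C * ((p n : ℝ) / n)) ∧
    (Tendsto (fun n => (p n : ℝ) / n) atTop (𝓝 0) →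
      Tendsto (fun n => sSup {r : ℝ | ∃ i : Fin n,
          r = α n ⬝ᵥ (Minvhalf n * ((X n i)ᵀ * X n i) * Minvhalf n).mulVec (α n)})
        atTop (𝓝 0)) :=
  gee_gamma_max_bound_general m p X β0 hA1 b1 b2 hb1 hb2 hA2 b3 b4 hb3 hA3 R0 hR0 Rbar hRbar
    Minvhalf hM α hα
end
end

section
/- Under conditions (A2)–(A4), there exist constants c_1, c_2 > 0 such that λ_min(M̄_n(β_{n0})) ≥ c_1 λ_min(Σ_{i=1}^n X_i^T X_i) and λ_max(H̄_n(β_{n0})) ≤ c_2 λ_max(Σ_{i=1}^n X_i^T X_i); consequently, Σ_n = H̄_n^{-1}(β_{n0}) M̄_n(β_{n0}) H̄_n^{-1}(β_{n0}) satisfies λ_min(Σ_n) ≥ λ_min(M̄_n(β_{n0})) / λ_max(H̄_n(β_{n0}))² ≥ C n^{-1} for some constant C > 0 and all sufficiently large n. -/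
open MeasureTheory ProbabilityTheory Filter Matrix
open scoped BigOperators ENNReal NNReal Topology

noncomputable section

open GEE

/-!
`lmin` and `lmax` are the extreme Rayleigh quotients, so every inequality between quadratic
forms `c * (vᵀ A v) ≤ vᵀ B v` transfers to them. The quadratic form of a cluster term is
`zᵀ Q z` with `z = A_i^{1/2} X_i v`, where `Q = R̄⁻¹` for `H̄_n` and `Q = R̄⁻¹ R₀ R̄⁻¹` for `M̄_n`;
the diagonal entries `π(1 - π)` of `A_i` lie in `[b₁(1 - b₂), 1/4]` by (A2). This gives the first
two bounds with `c₁ = λ_min(R̄⁻¹ R₀ R̄⁻¹) b₁ (1 - b₂)` and `c₂ = λ_max(R̄⁻¹) / 4`.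

For the sandwich `Σ_n = H̄⁻¹ M̄ H̄⁻¹`, write a unit vector as `v = H̄ u`. Cauchy–Schwarz for the
semi-inner product of `H̄` gives `1 = |H̄ u|² ≤ λ_max(H̄)² |u|²`, hence
`vᵀ Σ_n v = uᵀ M̄ u ≥ λ_min(M̄) |u|² ≥ λ_min(M̄) / λ_max(H̄)²`. Finally (A3) places the spectrum of
`∑ X_iᵀ X_i` in `[n b₃, n b₄]`, which turns this into a lower bound of order `1 / n`.
-/

lemma sq_sqrt_mul_one_sub_le (t : ℝ) : Real.sqrt (t * (1 - t)) ^ 2 ≤ 4⁻¹ := by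
  rw [Real.sq_sqrt']
  exact max_le (by nlinarith [sq_nonneg (t - 2⁻¹)]) (by norm_num)

lemma mul_one_sub_le_sq_sqrt_mul_one_sub {b1 b2 t : ℝ} (hb1 : 0 ≤ b1) (hb2 : b2 ≤ 1)
    (h1 : b1 ≤ t) (h2 : t ≤ b2) : b1 * (1 - b2) ≤ Real.sqrt (t * (1 - t)) ^ 2 := by
  have h := mul_le_mul h1 (sub_le_sub_left h2 1) (sub_nonneg.2 hb2) (hb1.trans h1)
  rwa [Real.sq_sqrt ((mul_nonneg hb1 (sub_nonneg.2 hb2)).trans h)]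

lemma mul_inv_le_div_sq {c1 c2 b3 b4 t x y : ℝ} (hc1 : 0 ≤ c1) (hb3 : 0 ≤ b3) (ht : 0 < t)
    (hx : c1 * (t * b3) ≤ x) (hy : 0 < y) (hy' : y ≤ c2 * (t * b4)) :
    c1 * b3 / (c2 * b4) ^ 2 * t⁻¹ ≤ x / y ^ 2 := by
  have hc2b4 : c2 * b4 ≠ 0 := fun h => by
    rw [show c2 * (t * b4) = t * (c2 * b4) by ring, h, mul_zero] at hy'
    linarith
  calc c1 * b3 / (c2 * b4) ^ 2 * t⁻¹ = c1 * (t * b3) / (c2 * (t * b4)) ^ 2 := by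
        field_simp
    _ ≤ x / y ^ 2 :=
      div_le_div₀ ((by positivity : 0 ≤ c1 * (t * b3)).trans hx) hx (by positivity)
        (pow_le_pow_left₀ hy.le hy' 2)

namespace Matrix

variable {n : Type*} [Fintype n] {H : Matrix n n ℝ}

lemma IsHermitian.mulVec_dotProduct (hH : H.IsHermitian) (x y : n → ℝ) :
    (H *ᵥ x) ⬝ᵥ y = x ⬝ᵥ H *ᵥ y := by
  rw [dotProduct_mulVec, ← mulVec_transpose, ← conjTranspose_eq_transpose_of_trivial, hH.eq]

lemma PosSemidef.dotProduct_mulVec_sq_le (hH : H.PosSemidef) (x y : n → ℝ) :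
    (x ⬝ᵥ H *ᵥ y) ^ 2 ≤ (x ⬝ᵥ H *ᵥ x) * (y ⬝ᵥ H *ᵥ y) := by
  let := H.toSeminormedAddCommGroup hH
  let := H.toInnerProductSpace hH
  have hinner : ∀ x y : n → ℝ, (inner ℝ x y : ℝ) = x ⬝ᵥ H *ᵥ y := fun x y => by
    change (H *ᵥ y) ⬝ᵥ star x = _
    rw [star_trivial, dotProduct_comm]
  have := real_inner_mul_inner_self_le x y
  simp only [hinner] at this
  rwa [sq]

lemma PosDef.inv_mul_mul_inv {R0 Rbar : Matrix n n ℝ} [DecidableEq n] (hR0 : R0.PosDef)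
    (hRbar : Rbar.PosDef) : (Rbar⁻¹ * R0 * Rbar⁻¹).PosDef := by
  have := hR0.conjTranspose_mul_mul_same (mulVec_injective_iff_isUnit.2 hRbar.inv.isUnit)
  rwa [hRbar.inv.isHermitian.eq] at this

end Matrix

namespace GEE

section Rayleigh

variable {b : ℕ}

lemma dotProduct_self_eq_sum_sq (v : Fin b → ℝ) : v ⬝ᵥ v = ∑ i, v i ^ 2 := by
  simp only [dotProduct, sq]

lemma vnorm_sq (v : Fin b → ℝ) : vnorm v ^ 2 = v ⬝ᵥ v := by
  rw [vnorm, Real.sq_sqrt (Finset.sum_nonneg fun _ _ => sq_nonneg _), dotProduct_self_eq_sum_sq]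

lemma dotProduct_self_nonneg (v : Fin b → ℝ) : 0 ≤ v ⬝ᵥ v := by
  rw [← vnorm_sq]
  positivity

lemma vnorm_eq_norm_toLp (v : Fin b → ℝ) : vnorm v = ‖WithLp.toLp 2 v‖ := by
  simp [vnorm, EuclideanSpace.norm_eq]

lemma isCompact_setOf_vnorm_eq_one : IsCompact {v : Fin b → ℝ | vnorm v = 1} := by
  convert (isCompact_sphere (0 : EuclideanSpace ℝ (Fin b)) 1).image (PiLp.continuous_ofLp 2 _)
  ext v
  simp only [Set.mem_ofPred_eq, vnorm_eq_norm_toLp, Set.mem_image, mem_sphere_iff_norm, sub_zero]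
  exact ⟨fun h => ⟨_, h, rfl⟩, by rintro ⟨x, hx, rfl⟩; simpa using hx⟩

lemma exists_vnorm_eq_one (hb : 0 < b) : ∃ v : Fin b → ℝ, vnorm v = 1 :=
  ⟨Pi.single ⟨0, hb⟩ 1, by simp [vnorm, Pi.single_apply]⟩

lemma exists_eq_smul_of_vnorm_eq_one {v : Fin b → ℝ} (hv : v ≠ 0) :
    ∃ (s : ℝ) (u : Fin b → ℝ), vnorm u = 1 ∧ v = s • u := by
  have hv' : WithLp.toLp 2 v ≠ 0 := by simpa using hv
  refine ⟨vnorm v, (vnorm v)⁻¹ • v, ?_, ?_⟩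
  · rw [vnorm_eq_norm_toLp, WithLp.toLp_smul, vnorm_eq_norm_toLp]
    exact norm_smul_inv_norm hv'
  · rw [smul_inv_smul₀ (vnorm_eq_norm_toLp v ▸ norm_ne_zero_iff.2 hv')]

lemma isCompact_setOf_rayleigh (M : Matrix (Fin b) (Fin b) ℝ) :
    IsCompact {r | ∃ v : Fin b → ℝ, vnorm v = 1 ∧ r = v ⬝ᵥ M *ᵥ v} := by
  convert isCompact_setOf_vnorm_eq_one.image (f := fun v => v ⬝ᵥ M *ᵥ v) (by fun_prop)
  ext r
  simp [eq_comm]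

variable {M A B : Matrix (Fin b) (Fin b) ℝ} {v : Fin b → ℝ} {c : ℝ}

lemma lmin_le (hv : vnorm v = 1) : lmin M ≤ v ⬝ᵥ M *ᵥ v :=
  csInf_le (isCompact_setOf_rayleigh M).bddBelow ⟨v, hv, rfl⟩

lemma le_lmax (hv : vnorm v = 1) : v ⬝ᵥ M *ᵥ v ≤ lmax M :=
  le_csSup (isCompact_setOf_rayleigh M).bddAbove ⟨v, hv, rfl⟩

lemma le_lmin (hb : 0 < b) (h : ∀ v : Fin b → ℝ, vnorm v = 1 → c ≤ v ⬝ᵥ M *ᵥ v) :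
    c ≤ lmin M := by
  obtain ⟨v, hv⟩ := exists_vnorm_eq_one hb
  refine le_csInf ⟨_, v, hv, rfl⟩ ?_
  rintro r ⟨v, hv, rfl⟩
  exact h v hv

lemma lmax_le (hb : 0 < b) (h : ∀ v : Fin b → ℝ, vnorm v = 1 → v ⬝ᵥ M *ᵥ v ≤ c) :
    lmax M ≤ c := by
  obtain ⟨v, hv⟩ := exists_vnorm_eq_one hb
  refine csSup_le ⟨_, v, hv, rfl⟩ ?_
  rintro r ⟨v, hv, rfl⟩
  exact h v hv

lemma lmin_le_lmax (hb : 0 < b) : lmin M ≤ lmax M := by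
  obtain ⟨v, hv⟩ := exists_vnorm_eq_one hb
  exact (lmin_le hv).trans (le_lmax hv)

lemma lmin_pos (hb : 0 < b) (hM : M.PosDef) : 0 < lmin M := by
  obtain ⟨v, hv, hmin⟩ := (isCompact_setOf_rayleigh M).sInf_mem
    (exists_vnorm_eq_one hb |>.elim fun v hv => ⟨_, v, hv, rfl⟩)
  have hv0 : v ≠ 0 := by rintro rfl; simp [vnorm] at hv
  simpa [lmin, hmin] using hM.dotProduct_mulVec_pos hv0

lemma lmin_mul_dotProduct_self_le (M : Matrix (Fin b) (Fin b) ℝ) (v : Fin b → ℝ) :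
    lmin M * (v ⬝ᵥ v) ≤ v ⬝ᵥ M *ᵥ v := by
  rcases eq_or_ne v 0 with rfl | hv
  · simp
  obtain ⟨s, u, hu, rfl⟩ := exists_eq_smul_of_vnorm_eq_one hv
  have huu : u ⬝ᵥ u = 1 := by rw [← vnorm_sq, hu, one_pow]
  simp only [mulVec_smul, dotProduct_smul, smul_dotProduct, smul_eq_mul, huu]
  nlinarith [lmin_le (M := M) hu, sq_nonneg s]

lemma le_lmax_mul_dotProduct_self (M : Matrix (Fin b) (Fin b) ℝ) (v : Fin b → ℝ) :
    v ⬝ᵥ M *ᵥ v ≤ lmax M * (v ⬝ᵥ v) := by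
  rcases eq_or_ne v 0 with rfl | hv
  · simp
  obtain ⟨s, u, hu, rfl⟩ := exists_eq_smul_of_vnorm_eq_one hv
  have huu : u ⬝ᵥ u = 1 := by rw [← vnorm_sq, hu, one_pow]
  simp only [mulVec_smul, dotProduct_smul, smul_dotProduct, smul_eq_mul, huu]
  nlinarith [le_lmax (M := M) hu, sq_nonneg s]

lemma mul_lmin_le_lmin (hb : 0 < b) (hc : 0 ≤ c)
    (h : ∀ v, c * (v ⬝ᵥ A *ᵥ v) ≤ v ⬝ᵥ B *ᵥ v) : c * lmin A ≤ lmin B :=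
  le_lmin hb fun v hv => (mul_le_mul_of_nonneg_left (lmin_le hv) hc).trans (h v)

lemma lmax_le_mul_lmax (hb : 0 < b) (hc : 0 ≤ c)
    (h : ∀ v, v ⬝ᵥ B *ᵥ v ≤ c * (v ⬝ᵥ A *ᵥ v)) : lmax B ≤ c * lmax A :=
  lmax_le hb fun v hv => (h v).trans (mul_le_mul_of_nonneg_left (le_lmax hv) hc)

lemma mul_le_lmin_of_le_inv_mul {t : ℝ} (hb : 0 < b) (ht : 0 < t)
    (h : ∀ v : Fin b → ℝ, c * ∑ k, v k ^ 2 ≤ t⁻¹ * (v ⬝ᵥ M *ᵥ v)) : t * c ≤ lmin M :=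
  le_lmin hb fun v hv => by
    have := h v
    rwa [← dotProduct_self_eq_sum_sq, ← vnorm_sq, hv, one_pow, mul_one, le_inv_mul_iff₀ ht] at this

lemma lmax_le_mul_of_inv_mul_le {t : ℝ} (hb : 0 < b) (ht : 0 < t)
    (h : ∀ v : Fin b → ℝ, t⁻¹ * (v ⬝ᵥ M *ᵥ v) ≤ c * ∑ k, v k ^ 2) : lmax M ≤ t * c :=
  lmax_le hb fun v hv => by
    have := h v
    rwa [← dotProduct_self_eq_sum_sq, ← vnorm_sq, hv, one_pow, mul_one, inv_mul_le_iff₀ ht] at this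

lemma mulVec_dotProduct_mulVec_le_lmax_sq {H : Matrix (Fin b) (Fin b) ℝ} (hH : H.PosSemidef)
    (u : Fin b → ℝ) : (H *ᵥ u) ⬝ᵥ (H *ᵥ u) ≤ lmax H ^ 2 * (u ⬝ᵥ u) := by
  set w := H *ᵥ u
  have hcs := hH.dotProduct_mulVec_sq_le u w
  rw [← hH.isHermitian.mulVec_dotProduct] at hcs
  have hu := le_lmax_mul_dotProduct_self H u
  have hw := le_lmax_mul_dotProduct_self H w
  have hu0 : 0 ≤ u ⬝ᵥ H *ᵥ u := by simpa using hH.dotProduct_mulVec_nonneg u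
  have hw0 : 0 ≤ w ⬝ᵥ H *ᵥ w := by simpa using hH.dotProduct_mulVec_nonneg w
  have : (w ⬝ᵥ w) ^ 2 ≤ lmax H ^ 2 * (u ⬝ᵥ u) * (w ⬝ᵥ w) := by
    calc (w ⬝ᵥ w) ^ 2 ≤ (u ⬝ᵥ H *ᵥ u) * (w ⬝ᵥ H *ᵥ w) := hcs
      _ ≤ (lmax H * (u ⬝ᵥ u)) * (lmax H * (w ⬝ᵥ w)) := mul_le_mul hu hw hw0 (hu0.trans hu)
      _ = _ := by ring
  rcases (dotProduct_self_nonneg w).eq_or_lt with hww | hww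
  · rw [← hww]
    exact mul_nonneg (sq_nonneg _) (dotProduct_self_nonneg u)
  · nlinarith

lemma div_lmax_sq_le_lmin_inv_mul_mul_inv (hb : 0 < b) {H M : Matrix (Fin b) (Fin b) ℝ}
    (hH : H.PosDef) (hM : 0 ≤ lmin M) : lmin M / lmax H ^ 2 ≤ lmin (H⁻¹ * M * H⁻¹) := by
  refine le_lmin hb fun v hv => ?_
  set u := H⁻¹ *ᵥ v
  have hHu : H *ᵥ u = v := by
    rw [mulVec_mulVec, mul_nonsing_inv _ ((isUnit_iff_isUnit_det H).1 hH.isUnit), one_mulVec]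
  have hquad : v ⬝ᵥ (H⁻¹ * M * H⁻¹) *ᵥ v = u ⬝ᵥ M *ᵥ u := by
    rw [← mulVec_mulVec, ← mulVec_mulVec, ← hH.inv.isHermitian.mulVec_dotProduct]
  have hv1 : 1 ≤ lmax H ^ 2 * (u ⬝ᵥ u) := by
    calc (1 : ℝ) = v ⬝ᵥ v := by rw [← vnorm_sq, hv, one_pow]
      _ = (H *ᵥ u) ⬝ᵥ (H *ᵥ u) := by rw [hHu]
      _ ≤ lmax H ^ 2 * (u ⬝ᵥ u) := mulVec_dotProduct_mulVec_le_lmax_sq hH.posSemidef u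
  have hL : 0 < lmax H ^ 2 := by
    refine (sq_nonneg _).lt_of_ne fun h => ?_
    rw [← h, zero_mul] at hv1
    linarith
  calc lmin M / lmax H ^ 2 ≤ lmin M * (u ⬝ᵥ u) := by
        rw [div_eq_mul_inv]
        exact mul_le_mul_of_nonneg_left ((inv_le_iff_one_le_mul₀' hL).2 hv1) hM
    _ ≤ u ⬝ᵥ M *ᵥ u := lmin_mul_dotProduct_self_le M u
    _ = _ := hquad.symm

end Rayleigh

section Cluster

variable {a b : ℕ}

lemma Mcluster_eq_Hcluster (Xi : Matrix (Fin a) (Fin b) ℝ) (W R : Matrix (Fin a) (Fin a) ℝ)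
    (β : Fin b → ℝ) : Mcluster Xi W R β = Hcluster Xi (W * R * W) β := by
  simp only [Mcluster, Hcluster, Matrix.mul_assoc]

lemma Hcluster_eq_transpose_mul_mul (Xi : Matrix (Fin a) (Fin b) ℝ)
    (Q : Matrix (Fin a) (Fin a) ℝ) (β : Fin b → ℝ) :
    Hcluster Xi Q β = (Ahalf Xi β * Xi)ᵀ * Q * (Ahalf Xi β * Xi) := by
  rw [transpose_mul, Ahalf, diagonal_transpose]
  simp only [Hcluster, Ahalf, Matrix.mul_assoc]

lemma dotProduct_transpose_mul_mul_mulVec (B : Matrix (Fin a) (Fin b) ℝ)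
    (Q : Matrix (Fin a) (Fin a) ℝ) (v : Fin b → ℝ) :
    v ⬝ᵥ (Bᵀ * Q * B) *ᵥ v = (B *ᵥ v) ⬝ᵥ Q *ᵥ (B *ᵥ v) := by
  rw [← mulVec_mulVec, ← mulVec_mulVec, dotProduct_mulVec, vecMul_transpose]

lemma dotProduct_transpose_mul_self_mulVec (B : Matrix (Fin a) (Fin b) ℝ) (v : Fin b → ℝ) :
    v ⬝ᵥ (Bᵀ * B) *ᵥ v = (B *ᵥ v) ⬝ᵥ (B *ᵥ v) := by
  rw [← mulVec_mulVec, dotProduct_mulVec, vecMul_transpose]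

lemma diagonal_mulVec_dotProduct_self (d z : Fin a → ℝ) :
    (diagonal d *ᵥ z) ⬝ᵥ (diagonal d *ᵥ z) = ∑ j, d j ^ 2 * (z j * z j) := by
  simp only [dotProduct, mulVec_diagonal]
  exact Finset.sum_congr rfl fun j _ => by ring

lemma mul_dotProduct_self_le_diagonal_mulVec {d : Fin a → ℝ} {c : ℝ} (h : ∀ j, c ≤ d j ^ 2)
    (z : Fin a → ℝ) : c * (z ⬝ᵥ z) ≤ (diagonal d *ᵥ z) ⬝ᵥ (diagonal d *ᵥ z) := by
  rw [diagonal_mulVec_dotProduct_self, dotProduct, Finset.mul_sum]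
  exact Finset.sum_le_sum fun j _ => mul_le_mul_of_nonneg_right (h j) (mul_self_nonneg _)

lemma diagonal_mulVec_le_mul_dotProduct_self {d : Fin a → ℝ} {c : ℝ} (h : ∀ j, d j ^ 2 ≤ c)
    (z : Fin a → ℝ) : (diagonal d *ᵥ z) ⬝ᵥ (diagonal d *ᵥ z) ≤ c * (z ⬝ᵥ z) := by
  rw [diagonal_mulVec_dotProduct_self, dotProduct, Finset.mul_sum]
  exact Finset.sum_le_sum fun j _ => mul_le_mul_of_nonneg_right (h j) (mul_self_nonneg _)

variable {Xi : Matrix (Fin a) (Fin b) ℝ} {Q : Matrix (Fin a) (Fin a) ℝ} {β : Fin b → ℝ}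
  {b1 b2 : ℝ}

lemma lmin_mul_le_Hcluster (hQ : 0 ≤ lmin Q) (hb1 : 0 ≤ b1) (hb2 : b2 ≤ 1)
    (hA : ∀ j, b1 ≤ piv Xi β j ∧ piv Xi β j ≤ b2) (v : Fin b → ℝ) :
    lmin Q * (b1 * (1 - b2)) * (v ⬝ᵥ (Xiᵀ * Xi) *ᵥ v) ≤ v ⬝ᵥ Hcluster Xi Q β *ᵥ v := by
  rw [Hcluster_eq_transpose_mul_mul, dotProduct_transpose_mul_mul_mulVec,
    dotProduct_transpose_mul_self_mulVec, ← mulVec_mulVec, mul_assoc]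
  have hA' : ∀ j, b1 * (1 - b2) ≤ Real.sqrt (piv Xi β j * (1 - piv Xi β j)) ^ 2 := fun j =>
    mul_one_sub_le_sq_sqrt_mul_one_sub hb1 hb2 (hA j).1 (hA j).2
  exact (mul_le_mul_of_nonneg_left (mul_dotProduct_self_le_diagonal_mulVec hA' _) hQ).trans
    (lmin_mul_dotProduct_self_le Q _)

lemma Hcluster_le_lmax_mul (hQ : 0 ≤ lmax Q) (v : Fin b → ℝ) :
    v ⬝ᵥ Hcluster Xi Q β *ᵥ v ≤ lmax Q / 4 * (v ⬝ᵥ (Xiᵀ * Xi) *ᵥ v) := by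
  rw [Hcluster_eq_transpose_mul_mul, dotProduct_transpose_mul_mul_mulVec,
    dotProduct_transpose_mul_self_mulVec, ← mulVec_mulVec, div_eq_mul_inv, mul_assoc]
  exact (le_lmax_mul_dotProduct_self Q _).trans (mul_le_mul_of_nonneg_left
    (diagonal_mulVec_le_mul_dotProduct_self (fun j => sq_sqrt_mul_one_sub_le _) _) hQ)

end Cluster

section Design

variable {n a b : ℕ} {X : Fin n → Matrix (Fin a) (Fin b) ℝ} {Q : Matrix (Fin a) (Fin a) ℝ}
  {β : Fin b → ℝ} {b1 b2 : ℝ}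

lemma dotProduct_sum_mulVec {ι : Type*} (s : Finset ι) (A : ι → Matrix (Fin b) (Fin b) ℝ)
    (v : Fin b → ℝ) : v ⬝ᵥ (∑ i ∈ s, A i) *ᵥ v = ∑ i ∈ s, v ⬝ᵥ A i *ᵥ v := by
  rw [sum_mulVec, dotProduct_sum]

lemma lmin_mul_le_sum_Hcluster (hQ : 0 ≤ lmin Q) (hb1 : 0 ≤ b1) (hb2 : b2 ≤ 1)
    (hA : ∀ i j, b1 ≤ piv (X i) β j ∧ piv (X i) β j ≤ b2) (v : Fin b → ℝ) :
    lmin Q * (b1 * (1 - b2)) * (v ⬝ᵥ (∑ i, (X i)ᵀ * X i) *ᵥ v) ≤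
      v ⬝ᵥ (∑ i, Hcluster (X i) Q β) *ᵥ v := by
  simp only [dotProduct_sum_mulVec, Finset.mul_sum]
  exact Finset.sum_le_sum fun i _ => lmin_mul_le_Hcluster hQ hb1 hb2 (hA i) v

lemma sum_Hcluster_le_lmax_mul (hQ : 0 ≤ lmax Q) (v : Fin b → ℝ) :
    v ⬝ᵥ (∑ i, Hcluster (X i) Q β) *ᵥ v ≤
      lmax Q / 4 * (v ⬝ᵥ (∑ i, (X i)ᵀ * X i) *ᵥ v) := by
  simp only [dotProduct_sum_mulVec, Finset.mul_sum]
  exact Finset.sum_le_sum fun i _ => Hcluster_le_lmax_mul hQ v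

lemma mul_lmin_le_lmin_sum_Hcluster (hb : 0 < b) (hQ : 0 ≤ lmin Q) (hb1 : 0 ≤ b1) (hb2 : b2 ≤ 1)
    (hA : ∀ i j, b1 ≤ piv (X i) β j ∧ piv (X i) β j ≤ b2) :
    lmin Q * (b1 * (1 - b2)) * lmin (∑ i, (X i)ᵀ * X i) ≤ lmin (∑ i, Hcluster (X i) Q β) :=
  mul_lmin_le_lmin hb (mul_nonneg hQ (mul_nonneg hb1 (sub_nonneg.2 hb2)))
    (lmin_mul_le_sum_Hcluster hQ hb1 hb2 hA)

lemma lmax_sum_Hcluster_le (hb : 0 < b) (hQ : 0 ≤ lmax Q) :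
    lmax (∑ i, Hcluster (X i) Q β) ≤ lmax Q / 4 * lmax (∑ i, (X i)ᵀ * X i) :=
  lmax_le_mul_lmax hb (by positivity) (sum_Hcluster_le_lmax_mul hQ)

lemma posDef_sum_Hcluster (ha : 0 < a) (hQ : Q.PosDef) (hb1 : 0 < b1) (hb2 : b2 < 1)
    (hA : ∀ i j, b1 ≤ piv (X i) β j ∧ piv (X i) β j ≤ b2)
    (hX : 0 < lmin (∑ i, (X i)ᵀ * X i)) :
    (∑ i, Hcluster (X i) Q β).PosDef := by
  refine .of_dotProduct_mulVec_pos (posSemidef_sum _ fun i _ => ?_).isHermitian fun v hv => ?_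
  · rw [Hcluster_eq_transpose_mul_mul, ← conjTranspose_eq_transpose_of_trivial]
    exact hQ.posSemidef.conjTranspose_mul_mul_same _
  have hv' : 0 < v ⬝ᵥ v := (dotProduct_self_nonneg v).lt_of_ne' (dotProduct_self_eq_zero.not.2 hv)
  have hc : 0 < lmin Q * (b1 * (1 - b2)) :=
    mul_pos (lmin_pos ha hQ) (mul_pos hb1 (sub_pos.2 hb2))
  calc (0 : ℝ) < lmin Q * (b1 * (1 - b2)) * (lmin (∑ i, (X i)ᵀ * X i) * (v ⬝ᵥ v)) := by
        positivity
    _ ≤ lmin Q * (b1 * (1 - b2)) * (v ⬝ᵥ (∑ i, (X i)ᵀ * X i) *ᵥ v) :=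
      mul_le_mul_of_nonneg_left (lmin_mul_dotProduct_self_le _ v) hc.le
    _ ≤ _ := lmin_mul_le_sum_Hcluster (lmin_pos ha hQ).le hb1.le hb2.le hA v
    _ = _ := by rw [star_trivial]

end Design

end GEE

/-- eigenvalue bounds λ_min(M̄) ≥ c₁λ_min(ΣXᵀX), λ_max(H̄) ≤ c₂λ_max(ΣXᵀX),
and consequently λ_min(Σ_n) ≥ λ_min(M̄)/λ_max(H̄)² ≥ C n⁻¹ for large n. -/
theorem gee_Sigma_eigenvalue_bounds
    (m : ℕ) (hm : 0 < m) (p : ℕ → ℕ) (hp : ∀ n, 0 < p n)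
    (X : ∀ n, Fin n → Matrix (Fin m) (Fin (p n)) ℝ)
    (β0 : ∀ n, Fin (p n) → ℝ)
    (b1 b2 : ℝ) (hb1 : 0 < b1) (hb2 : b2 < 1)
    (hA2 : ∀ n (i : Fin n) j, b1 ≤ piv (X n i) (β0 n) j ∧ piv (X n i) (β0 n) j ≤ b2)
    (b3 b4 : ℝ) (hb3 : 0 < b3)
    (hA3 : ∀ n, 0 < n → ∀ v : Fin (p n) → ℝ,
      b3 * (∑ k, v k ^ 2) ≤ (n : ℝ)⁻¹ * (v ⬝ᵥ (∑ i, (X n i)ᵀ * X n i).mulVec v) ∧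
      (n : ℝ)⁻¹ * (v ⬝ᵥ (∑ i, (X n i)ᵀ * X n i).mulVec v) ≤ b4 * (∑ k, v k ^ 2))
    (R0 : Matrix (Fin m) (Fin m) ℝ) (hR0 : R0.PosDef)
    (Rbar : Matrix (Fin m) (Fin m) ℝ) (hRbar : Rbar.PosDef)
    (Sig : ∀ n, Matrix (Fin (p n)) (Fin (p n)) ℝ)
    (hSig : ∀ n, Sig n =
      (∑ i, Hcluster (X n i) Rbar⁻¹ (β0 n))⁻¹ *
        (∑ i, Mcluster (X n i) Rbar⁻¹ R0 (β0 n)) *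
        (∑ i, Hcluster (X n i) Rbar⁻¹ (β0 n))⁻¹) :
    (∃ c1 : ℝ, 0 < c1 ∧ ∀ n,
        c1 * lmin (∑ i, (X n i)ᵀ * X n i) ≤
          lmin (∑ i, Mcluster (X n i) Rbar⁻¹ R0 (β0 n))) ∧
    (∃ c2 : ℝ, 0 < c2 ∧ ∀ n,
        lmax (∑ i, Hcluster (X n i) Rbar⁻¹ (β0 n)) ≤
          c2 * lmax (∑ i, (X n i)ᵀ * X n i)) ∧
    (∀ n, 0 < n →
        lmin (∑ i, Mcluster (X n i) Rbar⁻¹ R0 (β0 n)) /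
            lmax (∑ i, Hcluster (X n i) Rbar⁻¹ (β0 n)) ^ 2 ≤ lmin (Sig n)) ∧
    (∃ C : ℝ, 0 < C ∧ ∀ᶠ n : ℕ in atTop, C * (n : ℝ)⁻¹ ≤ lmin (Sig n)) := by
  have hW : Rbar⁻¹.PosDef := hRbar.inv
  have hWRW : (Rbar⁻¹ * R0 * Rbar⁻¹).PosDef := hR0.inv_mul_mul_inv hRbar
  set c1 := lmin (Rbar⁻¹ * R0 * Rbar⁻¹) * (b1 * (1 - b2))
  set c2 := lmax Rbar⁻¹ / 4
  have hW_lmax : 0 < lmax Rbar⁻¹ := (lmin_pos hm hW).trans_le (lmin_le_lmax hm)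
  have hc1 : 0 < c1 := mul_pos (lmin_pos hm hWRW) (mul_pos hb1 (sub_pos.2 hb2))
  have hM_lmin : ∀ n, c1 * lmin (∑ i, (X n i)ᵀ * X n i) ≤
      lmin (∑ i, Mcluster (X n i) Rbar⁻¹ R0 (β0 n)) := fun n => by
    simpa only [Mcluster_eq_Hcluster] using
      mul_lmin_le_lmin_sum_Hcluster (hp n) (lmin_pos hm hWRW).le hb1.le hb2.le (hA2 n)
  have hH_lmax : ∀ n, lmax (∑ i, Hcluster (X n i) Rbar⁻¹ (β0 n)) ≤
      c2 * lmax (∑ i, (X n i)ᵀ * X n i) := fun n => lmax_sum_Hcluster_le (hp n) hW_lmax.le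
  have hS_lmin : ∀ n, 0 < n → n * b3 ≤ lmin (∑ i, (X n i)ᵀ * X n i) := fun n hn =>
    mul_le_lmin_of_le_inv_mul (hp n) (Nat.cast_pos.2 hn) fun v => (hA3 n hn v).1
  have hS_lmax : ∀ n, 0 < n → lmax (∑ i, (X n i)ᵀ * X n i) ≤ n * b4 := fun n hn =>
    lmax_le_mul_of_inv_mul_le (hp n) (Nat.cast_pos.2 hn) fun v => (hA3 n hn v).2
  have hM_rate : ∀ n, 0 < n → c1 * (n * b3) ≤ lmin (∑ i, Mcluster (X n i) Rbar⁻¹ R0 (β0 n)) :=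
    fun n hn => (mul_le_mul_of_nonneg_left (hS_lmin n hn) hc1.le).trans (hM_lmin n)
  have hH_pd : ∀ n, 0 < n → (∑ i, Hcluster (X n i) Rbar⁻¹ (β0 n)).PosDef := fun n hn =>
    posDef_sum_Hcluster hm hW hb1 hb2 (hA2 n)
      ((mul_pos (Nat.cast_pos.2 hn) hb3).trans_le (hS_lmin n hn))
  have hSig_lmin : ∀ n, 0 < n → lmin (∑ i, Mcluster (X n i) Rbar⁻¹ R0 (β0 n)) /
      lmax (∑ i, Hcluster (X n i) Rbar⁻¹ (β0 n)) ^ 2 ≤ lmin (Sig n) := fun n hn =>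
    hSig n ▸ div_lmax_sq_le_lmin_inv_mul_mul_inv (hp n) (hH_pd n hn)
      ((by positivity : 0 ≤ c1 * (n * b3)).trans (hM_rate n hn))
  have hb4 : 0 < b4 := hb3.trans_le <| by
    simpa using (hS_lmin 1 one_pos).trans ((lmin_le_lmax (hp 1)).trans (hS_lmax 1 one_pos))
  refine ⟨⟨c1, hc1, hM_lmin⟩, ⟨c2, by positivity, hH_lmax⟩, hSig_lmin,
    c1 * b3 / (c2 * b4) ^ 2, by positivity, eventually_atTop.2 ⟨1, fun n hn => ?_⟩⟩
  have hH_pos := (lmin_pos (hp n) (hH_pd n hn)).trans_le (lmin_le_lmax (hp n))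
  exact (mul_inv_le_div_sq hc1.le hb3.le (Nat.cast_pos.2 hn) (hM_rate n hn) hH_pos
    ((hH_lmax n).trans (mul_le_mul_of_nonneg_left (hS_lmax n hn) (by positivity)))).trans
    (hSig_lmin n hn)
end
end
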